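/- arXiv:1901.09689 — 5 statements merged into one kernel-verified Lean document; each statement's English description precedes it below -/
import Mathlib

section
/- Let D ⊆ ℝ^d be closed, N ≥ 1, and for each ℓ = 0,…,N−1 let Ψ^ℓ be a finite set of continuous real-valued functions on D such that span Ψ^ℓ ⊆ span Ψ^{ℓ+1} for ℓ = 0,…,N−2 and each Ψ^ℓ is locally linearly independent. Let D = Ω^0 ⊇ Ω^1 ⊇ … ⊇ Ω^{N−1} be closed subsets and set Ω^N := ∅. Then the hierarchical basis H := {(ℓ,ψ) : 0 ≤ ℓ ≤ N−1, ψ ∈ Ψ^ℓ, supp ψ ⊆ Ω^ℓ and supp ψ ⊄ Ω^{ℓ+1}} is linearly independent: if a linear combination Σ_{(ℓ,ψ)∈H} c_{ℓ,ψ} ψ vanishes identically on D, then all coefficients c_{ℓ,ψ} are zero. -/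
noncomputable section
open Set

namespace Hier

/-- The support of a function `ψ` defined on `D ⊆ ℝ^d`:  the closure (in the
ambient space) of `{x ∈ D : ψ x ≠ 0}`. -/
def spt {d : ℕ} (D : Set (Fin d → ℝ)) (ψ : ↥D → ℝ) : Set (Fin d → ℝ) :=
  closure (Subtype.val '' {x : ↥D | ψ x ≠ 0})

/-- A set `Ψ` of real-valued functions on `D ⊆ ℝ^d` is locally linearly
independent if, for every open `O ⊆ ℝ^d` with `O ∩ D ≠ ∅`, the functions of `Ψ`
that do not vanish identically on `O ∩ D` are linearly independent as functions
on `O ∩ D`. -/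
def LocallyLinIndep {d : ℕ} (D : Set (Fin d → ℝ)) (Ψ : Set (↥D → ℝ)) : Prop :=
  ∀ O : Set (Fin d → ℝ), IsOpen O → (O ∩ D).Nonempty →
    LinearIndependent ℝ
      (fun f : {f : ↥D → ℝ // f ∈ Ψ ∧ ¬ ∀ x : ↥D, (x : Fin d → ℝ) ∈ O → f x = 0} =>
        fun x : {x : ↥D // (x : Fin d → ℝ) ∈ O} => f.1 x.1)

end Hier


namespace Hier

lemma exists_of_not_spt_subset {d : ℕ} {D : Set (Fin d → ℝ)} {ψ : ↥D → ℝ}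
    {Ω : Set (Fin d → ℝ)} (hΩ : IsClosed Ω) (h : ¬ spt D ψ ⊆ Ω) :
    ∃ x : ↥D, ψ x ≠ 0 ∧ (x : Fin d → ℝ) ∉ Ω := by
  by_contra hc
  push_neg at hc
  exact h (closure_minimal (by rintro _ ⟨x, hx, rfl⟩; exact hc x hx) hΩ)

lemma eq_zero_of_spt_subset {d : ℕ} {D : Set (Fin d → ℝ)} {ψ : ↥D → ℝ}
    {Ω : Set (Fin d → ℝ)} (h : spt D ψ ⊆ Ω) (x : ↥D) (hx : (x : Fin d → ℝ) ∉ Ω) :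
    ψ x = 0 := by
  by_contra hne
  exact hx (h (subset_closure ⟨x, hne, rfl⟩))

/-- Linear independence of the hierarchical basis
`H = {(ℓ,ψ) : 0 ≤ ℓ ≤ N−1, ψ ∈ Ψ^ℓ, supp ψ ⊆ Ω^ℓ, supp ψ ⊄ Ω^{ℓ+1}}`:
a linear combination of functions of `H` vanishing identically on `D` has all
coefficients zero. -/
theorem hierarchical_basis_linearIndependent {d : ℕ} (D : Set (Fin d → ℝ))
    (hD : IsClosed D) (N : ℕ) (hN : 1 ≤ N) (Ψ : ℕ → Set (↥D → ℝ))
    (hfin : ∀ ℓ < N, (Ψ ℓ).Finite)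
    (hcont : ∀ ℓ < N, ∀ ψ ∈ Ψ ℓ, Continuous ψ)
    (hspan : ∀ ℓ, ℓ + 1 < N → Submodule.span ℝ (Ψ ℓ) ≤ Submodule.span ℝ (Ψ (ℓ + 1)))
    (hLLI : ∀ ℓ < N, LocallyLinIndep D (Ψ ℓ))
    (Ωh : ℕ → Set (Fin d → ℝ)) (hΩ0 : Ωh 0 = D)
    (hclosed : ∀ ℓ < N, IsClosed (Ωh ℓ))
    (hanti : ∀ ℓ, ℓ + 1 < N → Ωh (ℓ + 1) ⊆ Ωh ℓ)
    (hΩN : Ωh N = ∅) :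
    LinearIndependent ℝ
      (fun w : {w : ℕ × (↥D → ℝ) //
          w.1 < N ∧ w.2 ∈ Ψ w.1 ∧ spt D w.2 ⊆ Ωh w.1 ∧ ¬ spt D w.2 ⊆ Ωh (w.1 + 1)} =>
        w.1.2) := by
  classical
  -- Ωh is antitone up to level N
  have hmono : ∀ a b : ℕ, a ≤ b → b < N → Ωh b ⊆ Ωh a := by
    intro a b hab hbN
    induction b with
    | zero => simpa [Nat.le_zero.mp hab] using subset_rfl
    | succ b ih =>
      rcases Nat.lt_or_ge a (b+1) with h | h
      · exact (hanti b hbN).trans (ih (Nat.lt_succ_iff.mp h) (Nat.lt_of_succ_lt hbN))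
      · have : a = b + 1 := le_antisymm hab h
        simp [this]
  set K := {w : ℕ × (↥D → ℝ) //
      w.1 < N ∧ w.2 ∈ Ψ w.1 ∧ spt D w.2 ⊆ Ωh w.1 ∧ ¬ spt D w.2 ⊆ Ωh (w.1 + 1)} with hK
  rw [linearIndependent_iff']
  intro s g hsum
  have hsum' : ∀ x : ↥D, ∑ i ∈ s, g i * i.1.2 x = 0 := by
    intro x
    have := congrFun hsum x
    simpa [Finset.sum_apply] using this
  suffices Hlev : ∀ ℓ : ℕ, ∀ i ∈ s, i.1.1 = ℓ → g i = 0 by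
    intro i hi; exact Hlev i.1.1 i hi rfl
  intro ℓ
  induction ℓ using Nat.strong_induction_on with
  | _ ℓ IH =>
  intro i hi hlev
  have hℓN : ℓ < N := hlev ▸ i.2.1
  -- the open set O
  set O : Set (Fin d → ℝ) := (Ωh (ℓ + 1))ᶜ with hO
  have hΩcl : IsClosed (Ωh (ℓ + 1)) := by
    rcases Nat.lt_or_ge (ℓ + 1) N with h | h
    · exact hclosed _ h
    · have : ℓ + 1 = N := le_antisymm (Nat.succ_le_of_lt hℓN) h
      rw [this, hΩN]; exact isClosed_empty
  have hOopen : IsOpen O := hΩcl.isOpen_compl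
  -- nonvanishing on O for any level-ℓ element of H
  have hnv : ∀ w : K, w.1.1 = ℓ →
      ¬ ∀ x : ↥D, (x : Fin d → ℝ) ∈ O → w.1.2 x = 0 := by
    intro w hw hall
    obtain ⟨x, hx0, hxΩ⟩ := exists_of_not_spt_subset hΩcl (hw ▸ w.2.2.2.2)
    exact hx0 (hall x hxΩ)
  have hne : (O ∩ D).Nonempty := by
    obtain ⟨x, hx0, hxΩ⟩ := exists_of_not_spt_subset hΩcl (hlev ▸ i.2.2.2.2)
    exact ⟨x, hxΩ, x.2⟩
  have hLI := hLLI ℓ hℓN O hOopen hne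
  -- inject level-ℓ elements of H into the LLI index type
  have hLI' := hLI.comp
    (fun w : {w : K // w.1.1 = ℓ} =>
      (⟨w.1.1.2, by have h := w.1.2.2.1; rwa [w.2] at h, hnv w.1 w.2⟩ :
        {f : ↥D → ℝ // f ∈ Ψ ℓ ∧ ¬ ∀ x : ↥D, (x : Fin d → ℝ) ∈ O → f x = 0}))
    (by
      intro a b hab
      have h2 : a.1.1.2 = b.1.1.2 := congrArg Subtype.val hab
      have h1 : a.1.1.1 = b.1.1.1 := a.2.trans b.2.symm
      exact Subtype.ext (Subtype.ext (Prod.ext h1 h2)))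
  rw [linearIndependent_iff'] at hLI'
  have key := hLI' (s.subtype (fun w => w.1.1 = ℓ)) (fun w => g w.1) ?_ ⟨i, hlev⟩
    (by simpa [Finset.mem_subtype] using hi)
  · exact key
  · -- the restricted sum vanishes
    funext x
    simp only [Function.comp, Finset.sum_apply, Pi.smul_apply, smul_eq_mul, Pi.zero_apply]
    rw [Finset.sum_subtype_eq_sum_filter (fun w => g w * w.1.2 x.1)]
    have split := Finset.sum_filter_add_sum_filter_not s (fun w : K => w.1.1 = ℓ)
      (fun w => g w * w.1.2 x.1)
    have hrest : ∑ w ∈ s.filter (fun w : K => ¬ w.1.1 = ℓ), g w * w.1.2 x.1 = 0 := by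
      apply Finset.sum_eq_zero
      intro w hw
      rw [Finset.mem_filter] at hw
      rcases Nat.lt_or_ge w.1.1 ℓ with h | h
      · rw [IH w.1.1 h w hw.1 rfl, zero_mul]
      · have hgt : ℓ + 1 ≤ w.1.1 := Nat.succ_le_of_lt (lt_of_le_of_ne h (Ne.symm hw.2))
        have hsub : spt D w.1.2 ⊆ Ωh (ℓ + 1) :=
          w.2.2.2.1.trans (hmono (ℓ + 1) w.1.1 hgt w.2.1)
        rw [eq_zero_of_spt_subset hsub x.1 x.2, mul_zero]
    have := hsum' x.1
    rw [← split, hrest, add_zero] at this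
    exact this

end Hier
end
end

section
/- Let D ⊆ ℝ^d be closed, N ≥ 1, and for each ℓ = 0,…,N−1 let Ψ^ℓ be a finite set of continuous real-valued functions on D such that span Ψ^ℓ ⊆ span Ψ^{ℓ+1} for ℓ = 0,…,N−2 and each Ψ^ℓ is locally linearly independent. Let D = Ω^0 ⊇ Ω^1 ⊇ … ⊇ Ω^{N−1} be closed subsets. For 0 ≤ ℓ ≤ N−1 define the intermediate hierarchical set H^ℓ := {(m,ψ) : 0 ≤ m ≤ ℓ, ψ ∈ Ψ^m, supp ψ ⊆ Ω^m, and (supp ψ ⊄ Ω^{m+1} if m < ℓ, while supp ψ ≠ ∅ if m = ℓ)}. Then the intermediate spline spaces are nested: span{ψ : (m,ψ) ∈ H^ℓ} ⊆ span{ψ : (m,ψ) ∈ H^{ℓ+1}} for all ℓ = 0,…,N−2. -/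
/-!
Every generator of `H^ℓ` lies in `H^{ℓ+1}` except a level-`ℓ` function `ψ` with
`supp ψ ⊆ Ω^{ℓ+1}`. Such a `ψ` is a combination of functions of `Ψ^{ℓ+1}`; the combination
vanishes on the open set `(Ω^{ℓ+1})ᶜ`, so by local linear independence every function
occurring in it vanishes there too. Hence they are supported in `Ω^{ℓ+1}`, and the nonzero ones
belong to `H^{ℓ+1}`.
-/

noncomputable section
open Set

namespace Hier

/-- The intermediate hierarchical set `H^ℓ`:  pairs `(m, ψ)` with `m ≤ ℓ`,
`ψ ∈ Ψ^m`, `supp ψ ⊆ Ω^m`, and `supp ψ ⊄ Ω^{m+1}` if `m < ℓ`, while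
`supp ψ ≠ ∅` if `m = ℓ`. -/
def Hinter {d : ℕ} (D : Set (Fin d → ℝ)) (Ψ : ℕ → Set (↥D → ℝ))
    (Ωh : ℕ → Set (Fin d → ℝ)) (ℓ : ℕ) : Set (ℕ × (↥D → ℝ)) :=
  {w | w.1 ≤ ℓ ∧ w.2 ∈ Ψ w.1 ∧ spt D w.2 ⊆ Ωh w.1 ∧
      (w.1 < ℓ → ¬ spt D w.2 ⊆ Ωh (w.1 + 1)) ∧ (w.1 = ℓ → spt D w.2 ≠ ∅)}

section Support

variable {d : ℕ} {D : Set (Fin d → ℝ)} {f : ↥D → ℝ}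

lemma eq_zero_of_notMem_spt {x : ↥D} (h : (x : Fin d → ℝ) ∉ spt D f) : f x = 0 := by
  by_contra hx
  exact h (subset_closure ⟨x, hx, rfl⟩)

lemma spt_eq_empty_iff : spt D f = ∅ ↔ f = 0 := by
  refine ⟨fun h => funext fun x => eq_zero_of_notMem_spt (by simp [h]), ?_⟩
  rintro rfl
  simp [spt]

lemma spt_subset_compl_of_eqOn_zero {O : Set (Fin d → ℝ)} (hO : IsOpen O)
    (h : ∀ x : ↥D, (x : Fin d → ℝ) ∈ O → f x = 0) : spt D f ⊆ Oᶜ :=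
  closure_minimal (by rintro _ ⟨x, hx, rfl⟩ hxO; exact hx (h x hxO)) hO.isClosed_compl

end Support

section LocallyLinIndep

variable {d : ℕ} {D : Set (Fin d → ℝ)} {Ψ' : Set (↥D → ℝ)}

lemma LocallyLinIndep.eqOn_zero_of_mem_support (hLLI : LocallyLinIndep D Ψ')
    {O : Set (Fin d → ℝ)} (hO : IsOpen O) {c : (↥D → ℝ) →₀ ℝ} (hc : ↑c.support ⊆ Ψ')
    (hsum : ∀ x : ↥D, (x : Fin d → ℝ) ∈ O → (c.sum fun f r => r • f) x = 0)
    {f₀ : ↥D → ℝ} (hf₀ : f₀ ∈ c.support) :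
    ∀ x : ↥D, (x : Fin d → ℝ) ∈ O → f₀ x = 0 := by
  classical
  by_contra hf₀O
  obtain ⟨z, hzO, -⟩ := not_forall₂.mp hf₀O
  let p : (↥D → ℝ) → Prop := fun f => f ∈ Ψ' ∧ ¬ ∀ x : ↥D, (x : Fin d → ℝ) ∈ O → f x = 0
  have hcomb : ∑ t ∈ c.support.subtype p,
      c t.1 • (fun x : {x : ↥D // (x : Fin d → ℝ) ∈ O} => t.1 x.1) = 0 := by
    funext x
    have hdrop : ∀ f ∈ c.support, c f * f x.1 ≠ 0 → p f := fun f hf hne =>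
      ⟨hc hf, fun hvan => hne (by rw [hvan x.1 x.2, mul_zero])⟩
    simp only [Finset.sum_apply, Pi.smul_apply, smul_eq_mul, Pi.zero_apply]
    rw [Finset.sum_subtype_eq_sum_filter (fun f => c f * f x.1), Finset.sum_filter_of_ne hdrop]
    simpa only [Finsupp.sum, Finset.sum_apply, Pi.smul_apply, smul_eq_mul] using hsum x.1 x.2
  have hmem : (⟨f₀, hc hf₀, hf₀O⟩ : Subtype p) ∈ c.support.subtype p := by
    simpa using hf₀
  exact Finsupp.mem_support_iff.mp hf₀
    (linearIndependent_iff'.mp (hLLI O hO ⟨z, hzO, z.2⟩) _ (fun t => c t.1) hcomb _ hmem)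

lemma LocallyLinIndep.mem_span_spt_subset (hLLI : LocallyLinIndep D Ψ')
    {Ω' : Set (Fin d → ℝ)} (hΩ' : IsClosed Ω') {ψ : ↥D → ℝ}
    (hψ : ψ ∈ Submodule.span ℝ Ψ') (hψΩ' : spt D ψ ⊆ Ω') :
    ψ ∈ Submodule.span ℝ {f | f ∈ Ψ' ∧ spt D f ⊆ Ω'} := by
  obtain ⟨c, hc, rfl⟩ := Submodule.mem_span_set.mp hψ
  refine Submodule.sum_mem _ fun f hf => Submodule.smul_mem _ _ (Submodule.subset_span ⟨hc hf, ?_⟩)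
  have hvan := hLLI.eqOn_zero_of_mem_support hΩ'.isOpen_compl hc
    (fun x hx => eq_zero_of_notMem_spt fun hmem => hx (hψΩ' hmem)) hf
  simpa using spt_subset_compl_of_eqOn_zero hΩ'.isOpen_compl hvan

end LocallyLinIndep

section Hierarchy

variable {d : ℕ} {D : Set (Fin d → ℝ)} {Ψ : ℕ → Set (↥D → ℝ)} {Ωh : ℕ → Set (Fin d → ℝ)}
  {ℓ : ℕ}

lemma mem_Hinter_succ {w : ℕ × (↥D → ℝ)} (hw : w ∈ Hinter D Ψ Ωh ℓ)
    (hactive : w.1 = ℓ → ¬ spt D w.2 ⊆ Ωh (ℓ + 1)) : w ∈ Hinter D Ψ Ωh (ℓ + 1) := by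
  obtain ⟨hle, hΨ, hsub, hnest, -⟩ := hw
  refine ⟨hle.trans ℓ.le_succ, hΨ, hsub, fun hlt => ?_, fun h => absurd h (by omega)⟩
  rcases hle.lt_or_eq with hlt' | rfl
  · exact hnest hlt'
  · exact hactive rfl

lemma supported_diff_zero_subset_snd_Hinter_succ :
    {f | f ∈ Ψ (ℓ + 1) ∧ spt D f ⊆ Ωh (ℓ + 1)} \ {0} ⊆ Prod.snd '' Hinter D Ψ Ωh (ℓ + 1) :=
  fun f ⟨⟨hΨ, hsub⟩, hf0⟩ => ⟨(ℓ + 1, f),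
    ⟨le_rfl, hΨ, hsub, fun h => absurd h (lt_irrefl _), fun _ => spt_eq_empty_iff.not.mpr hf0⟩,
    rfl⟩

end Hierarchy

theorem intermediate_spaces_nested_general {d : ℕ} (D : Set (Fin d → ℝ))
    (N : ℕ) (Ψ : ℕ → Set (↥D → ℝ))
    (hspan : ∀ ℓ, ℓ + 1 < N → Submodule.span ℝ (Ψ ℓ) ≤ Submodule.span ℝ (Ψ (ℓ + 1)))
    (hLLI : ∀ ℓ < N, LocallyLinIndep D (Ψ ℓ))
    (Ωh : ℕ → Set (Fin d → ℝ))
    (hclosed : ∀ ℓ < N, IsClosed (Ωh ℓ)) :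
    ∀ ℓ, ℓ + 1 < N →
      Submodule.span ℝ (Prod.snd '' Hinter D Ψ Ωh ℓ) ≤
        Submodule.span ℝ (Prod.snd '' Hinter D Ψ Ωh (ℓ + 1)) := by
  intro ℓ hℓ
  rw [Submodule.span_le]
  rintro _ ⟨⟨m, ψ⟩, hw, rfl⟩
  by_cases hrefined : m = ℓ ∧ spt D ψ ⊆ Ωh (ℓ + 1)
  · obtain ⟨rfl, hsub⟩ := hrefined
    have hψ : ψ ∈ Submodule.span ℝ (Ψ (m + 1)) := hspan m hℓ (Submodule.subset_span hw.2.1)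
    have hψ' := (hLLI (m + 1) hℓ).mem_span_spt_subset (hclosed (m + 1) hℓ) hψ hsub
    rw [← Submodule.span_sdiff_singleton_zero] at hψ'
    exact Submodule.span_mono supported_diff_zero_subset_snd_Hinter_succ hψ'
  · exact Submodule.subset_span ⟨(m, ψ), mem_Hinter_succ hw fun hm h => hrefined ⟨hm, h⟩, rfl⟩

/-- The intermediate spline spaces are nested:
`span {ψ : (m,ψ) ∈ H^ℓ} ⊆ span {ψ : (m,ψ) ∈ H^{ℓ+1}}` for `ℓ = 0, …, N−2`. -/
theorem intermediate_spaces_nested {d : ℕ} (D : Set (Fin d → ℝ))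
    (hD : IsClosed D) (N : ℕ) (hN : 1 ≤ N) (Ψ : ℕ → Set (↥D → ℝ))
    (hfin : ∀ ℓ < N, (Ψ ℓ).Finite)
    (hcont : ∀ ℓ < N, ∀ ψ ∈ Ψ ℓ, Continuous ψ)
    (hspan : ∀ ℓ, ℓ + 1 < N → Submodule.span ℝ (Ψ ℓ) ≤ Submodule.span ℝ (Ψ (ℓ + 1)))
    (hLLI : ∀ ℓ < N, LocallyLinIndep D (Ψ ℓ))
    (Ωh : ℕ → Set (Fin d → ℝ)) (hΩ0 : Ωh 0 = D)
    (hclosed : ∀ ℓ < N, IsClosed (Ωh ℓ))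
    (hanti : ∀ ℓ, ℓ + 1 < N → Ωh (ℓ + 1) ⊆ Ωh ℓ) :
    ∀ ℓ, ℓ + 1 < N →
      Submodule.span ℝ (Prod.snd '' Hinter D Ψ Ωh ℓ) ≤
        Submodule.span ℝ (Prod.snd '' Hinter D Ψ Ωh (ℓ + 1)) :=
  intermediate_spaces_nested_general D N Ψ hspan hLLI Ωh hclosed

end Hier
end
end

section
/- Let D ⊆ ℝ^d be closed, 1 ≤ N ≤ N̂, and for each ℓ = 0,…,N̂−1 let Ψ^ℓ be a finite set of continuous real-valued functions on D such that span Ψ^ℓ ⊆ span Ψ^{ℓ+1} for ℓ = 0,…,N̂−2 and each Ψ^ℓ is locally linearly independent. Let D = Ω^0 ⊇ Ω^1 ⊇ … ⊇ Ω^{N−1} and D = Ω̂^0 ⊇ Ω̂^1 ⊇ … ⊇ Ω̂^{N̂−1} be closed subsets with Ω̂^0 = Ω^0 and Ω^ℓ ⊆ Ω̂^ℓ for ℓ = 1,…,N−1; set Ω^N := ∅ and Ω̂^{N̂} := ∅. Let H := {(ℓ,ψ) : 0 ≤ ℓ ≤ N−1, ψ ∈ Ψ^ℓ, supp ψ ⊆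 Ω^ℓ, supp ψ ⊄ Ω^{ℓ+1}} and Ĥ := {(ℓ,ψ) : 0 ≤ ℓ ≤ N̂−1, ψ ∈ Ψ^ℓ, supp ψ ⊆ Ω̂^ℓ, supp ψ ⊄ Ω̂^{ℓ+1}} be the corresponding hierarchical bases. Then span{ψ : (ℓ,ψ) ∈ H} ⊆ span{ψ : (ℓ,ψ) ∈ Ĥ}. -/
noncomputable section
open Set

namespace Hier

/-- The hierarchical basis associated with a domain hierarchy `Ωh`
(with `N` levels, and `Ωh N` understood to be `∅`). -/
def HierBasis {d : ℕ} (D : Set (Fin d → ℝ)) (Ψ : ℕ → Set (↥D → ℝ))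
    (Ωh : ℕ → Set (Fin d → ℝ)) (N : ℕ) : Set (ℕ × (↥D → ℝ)) :=
  {w | w.1 < N ∧ w.2 ∈ Ψ w.1 ∧ spt D w.2 ⊆ Ωh w.1 ∧ ¬ spt D w.2 ⊆ Ωh (w.1 + 1)}

lemma mem_spt {d : ℕ} {D : Set (Fin d → ℝ)} {ψ : ↥D → ℝ} {x : ↥D} (h : ψ x ≠ 0) :
    (x : Fin d → ℝ) ∈ spt D ψ :=
  subset_closure ⟨x, h, rfl⟩

lemma spt_subset_closed {d : ℕ} {D : Set (Fin d → ℝ)} {ψ : ↥D → ℝ} {S : Set (Fin d → ℝ)}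
    (hS : IsClosed S) (h : ∀ x : ↥D, ψ x ≠ 0 → (x : Fin d → ℝ) ∈ S) : spt D ψ ⊆ S :=
  closure_minimal (by rintro _ ⟨x, hx, rfl⟩; exact h x hx) hS

lemma eq_zero_of_spt_empty {d : ℕ} {D : Set (Fin d → ℝ)} {ψ : ↥D → ℝ}
    (h : spt D ψ ⊆ (∅ : Set (Fin d → ℝ))) : ψ = 0 :=
  funext fun x => by_contra fun hx => (h (mem_spt hx)).elim

/-- If `ψ` is a linear combination of functions from a locally linearly independent
set and `ψ` vanishes on an open set `O` meeting `D`, then every function occurring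
with a nonzero coefficient vanishes on `O ∩ D`. -/
lemma vanish_of_coeff_ne {d : ℕ} {D : Set (Fin d → ℝ)} {Ψk : Set (↥D → ℝ)}
    (hLLI : LocallyLinIndep D Ψk) {ψ : ↥D → ℝ}
    {c : (↥D → ℝ) →₀ ℝ} (hsupp : ↑c.support ⊆ Ψk)
    (hsum : (c.sum fun f r => r • f) = ψ)
    {O : Set (Fin d → ℝ)} (hO : IsOpen O) (hne : (O ∩ D).Nonempty)
    (hψO : ∀ x : ↥D, (x : Fin d → ℝ) ∈ O → ψ x = 0)
    {f : ↥D → ℝ} (hf : c f ≠ 0) :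
    ∀ x : ↥D, (x : Fin d → ℝ) ∈ O → f x = 0 := by
  classical
  by_contra hcon
  set p : (↥D → ℝ) → Prop := fun g => g ∈ Ψk ∧ ¬ ∀ x : ↥D, (x : Fin d → ℝ) ∈ O → g x = 0
    with hp
  have hfp : p f := ⟨hsupp (Finsupp.mem_support_iff.mpr hf), hcon⟩
  have hli := linearIndependent_iff''.mp (hLLI O hO hne)
  set s : Finset {g : ↥D → ℝ // p g} := c.support.subtype p with hs
  have hzero : ∀ i ∉ s, c i.1 = 0 := by
    intro i hi
    by_contra hci
    exact hi (Finset.mem_subtype.mpr (Finsupp.mem_support_iff.mpr hci))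
  have hsum0 : ∑ i ∈ s, c i.1 • (fun x : {x : ↥D // (x : Fin d → ℝ) ∈ O} => i.1 x.1) = 0 := by
    funext x
    have hfull : ∑ g ∈ c.support, c g * g x.1 = 0 := by
      have := congrFun hsum x.1
      rw [Finsupp.sum, Finset.sum_apply] at this
      simpa [hψO x.1 x.2] using this
    have h1 : ∑ i ∈ s, c i.1 * i.1 x.1 = ∑ g ∈ c.support.filter p, c g * g x.1 := by
      rw [hs]
      exact Finset.sum_subtype_eq_sum_filter (fun g => c g * g x.1) (s := c.support)
    have h2 : ∑ g ∈ c.support.filter p, c g * g x.1 = ∑ g ∈ c.support, c g * g x.1 := by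
      apply Finset.sum_filter_of_ne
      intro g hg hne'
      refine ⟨hsupp hg, fun hv => hne' ?_⟩
      rw [hv x.1 x.2, mul_zero]
    simp only [Finset.sum_apply, Pi.smul_apply, smul_eq_mul, Pi.zero_apply]
    rw [h1, h2, hfull]
  have := hli s (fun i => c i.1) hzero hsum0 ⟨f, hfp⟩
  exact hf this

/-- Support inclusion: every function with nonzero coefficient in a representation of
`ψ` over a locally linearly independent set has support contained in `spt ψ`. -/
lemma spt_le_spt {d : ℕ} {D : Set (Fin d → ℝ)} (hD : IsClosed D) {Ψk : Set (↥D → ℝ)}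
    (hLLI : LocallyLinIndep D Ψk) {ψ : ↥D → ℝ}
    {c : (↥D → ℝ) →₀ ℝ} (hsupp : ↑c.support ⊆ Ψk)
    (hsum : (c.sum fun f r => r • f) = ψ)
    {f : ↥D → ℝ} (hf : c f ≠ 0) :
    spt D f ⊆ spt D ψ := by
  by_cases hne : ((spt D ψ)ᶜ ∩ D).Nonempty
  · have hv := vanish_of_coeff_ne hLLI hsupp hsum isClosed_closure.isOpen_compl hne
      (fun x hx => by_contra fun h => hx (mem_spt h)) hf
    exact spt_subset_closed isClosed_closure
      (fun x hx => by_contra fun h => hx (hv x h))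
  · have hDsub : D ⊆ spt D ψ := fun y hy => by_contra fun h => hne ⟨y, h, hy⟩
    refine (spt_subset_closed hD fun x _ => x.2).trans hDsub

/-- Under an enlargement `Ω̂` of the subdomains `Ω`
(`Ω̂^0 = Ω^0 = D`, `Ω^ℓ ⊆ Ω̂^ℓ`, `N ≤ N̂`), the spans of the corresponding
hierarchical bases are nested: `span H ⊆ span Ĥ`. -/
theorem hierarchical_span_enlargement {d : ℕ} (D : Set (Fin d → ℝ))
    (hD : IsClosed D) (N Nh : ℕ) (hN : 1 ≤ N) (hNNh : N ≤ Nh)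
    (Ψ : ℕ → Set (↥D → ℝ))
    (hfin : ∀ ℓ < Nh, (Ψ ℓ).Finite)
    (hcont : ∀ ℓ < Nh, ∀ ψ ∈ Ψ ℓ, Continuous ψ)
    (hspan : ∀ ℓ, ℓ + 1 < Nh → Submodule.span ℝ (Ψ ℓ) ≤ Submodule.span ℝ (Ψ (ℓ + 1)))
    (hLLI : ∀ ℓ < Nh, LocallyLinIndep D (Ψ ℓ))
    (Ωh : ℕ → Set (Fin d → ℝ)) (hΩ0 : Ωh 0 = D)
    (hclosed : ∀ ℓ < N, IsClosed (Ωh ℓ))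
    (hanti : ∀ ℓ, ℓ + 1 < N → Ωh (ℓ + 1) ⊆ Ωh ℓ)
    (hΩN : Ωh N = ∅)
    (Ωhh : ℕ → Set (Fin d → ℝ)) (hΩh0 : Ωhh 0 = D)
    (hhclosed : ∀ ℓ < Nh, IsClosed (Ωhh ℓ))
    (hhanti : ∀ ℓ, ℓ + 1 < Nh → Ωhh (ℓ + 1) ⊆ Ωhh ℓ)
    (hΩhN : Ωhh Nh = ∅)
    (henlarge : ∀ ℓ, 1 ≤ ℓ → ℓ < N → Ωh ℓ ⊆ Ωhh ℓ) :
    Submodule.span ℝ (Prod.snd '' HierBasis D Ψ Ωh N) ≤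
      Submodule.span ℝ (Prod.snd '' HierBasis D Ψ Ωhh Nh) := by
  classical
  have key : ∀ m k, Nh ≤ k + m → k < Nh → ∀ ψ ∈ Ψ k, spt D ψ ⊆ Ωhh k →
      ψ ∈ Submodule.span ℝ (Prod.snd '' HierBasis D Ψ Ωhh Nh) := by
    intro m
    induction m with
    | zero => intro k hk hk' _ _ _; omega
    | succ m ih =>
      intro k hk hkNh ψ hψ hspt
      by_cases hnext : spt D ψ ⊆ Ωhh (k + 1)
      · by_cases hkN : k + 1 = Nh
        · have hzero : ψ = 0 := eq_zero_of_spt_empty (by rw [← hΩhN, ← hkN]; exact hnext)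
          rw [hzero]
          exact Submodule.zero_mem _
        · have hk1 : k + 1 < Nh := lt_of_le_of_ne hkNh hkN
          have hmem : ψ ∈ Submodule.span ℝ (Ψ (k + 1)) :=
            hspan k hk1 (Submodule.subset_span hψ)
          obtain ⟨c, hcsupp, hcsum⟩ := Submodule.mem_span_set.mp hmem
          rw [← hcsum, Finsupp.sum]
          refine Submodule.sum_mem _ fun f hf => Submodule.smul_mem _ _ ?_
          refine ih (k + 1) (by omega) hk1 f (hcsupp hf) ?_
          exact (spt_le_spt hD (hLLI (k + 1) hk1) hcsupp hcsum
            (Finsupp.mem_support_iff.mp hf)).trans hnext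
      · exact Submodule.subset_span ⟨(k, ψ), ⟨hkNh, hψ, hspt, hnext⟩, rfl⟩
  rw [Submodule.span_le]
  rintro _ ⟨⟨ℓ, ψ⟩, ⟨hℓ, hψ, hspt, _⟩, rfl⟩
  have hΩsub : Ωh ℓ ⊆ Ωhh ℓ := by
    rcases Nat.eq_zero_or_pos ℓ with h0 | h1
    · subst h0; rw [hΩ0, hΩh0]
    · exact henlarge ℓ h1 hℓ
  exact key Nh ℓ (by omega) (lt_of_lt_of_le hℓ hNNh) ψ hψ (hspt.trans hΩsub)

end Hier
end
end

section
/- For each i ∈ I₁, let f^(S) : [0,1]² → ℝ, S ∈ {L,R}, be given by f^(S)(ξ₁,ξ₂) := α^(S)(ξ₂)N_i^{p−1,r}(ξ₂)N₁^{p,r}(ξ₁). Then: (a) f^(L)(0,ξ₂) = f^(R)(0,ξ₂) = 0 for all ξ₂ ∈ [0,1], so the patchwise prescriptions φ_{Γ₁,i} ∘ F^(S) = f^(S) define a single function φ_{Γ₁,i} on Ω vanishing on Γ; (b) α^(R)(ξ₂)∂₁f^(L)(0,ξ₂) − α^(L)(ξ₂)∂₁f^(R)(0,ξ₂) + β(ξ₂)∂₂f^(L)(0,ξ₂)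 = 0 for all ξ₂ ∈ [0,1]; (c) consequently the gradients of the two patchwise pieces agree along the interface: (J_{F^(L)}(0,ξ₂))^{−T} ∇f^(L)(0,ξ₂) = (J_{F^(R)}(0,ξ₂))^{−T} ∇f^(R)(0,ξ₂) for all ξ₂ ∈ [0,1], where J_{F^(S)} denotes the Jacobian matrix of F^(S). -/
noncomputable section
open Set

namespace TwoPatch



/-- Cox–de Boor recursion for B-splines over the knot sequence `t`.  Degree-`0`
B-splines are the characteristic functions of `[t i, t (i+1))`, closed at the
right endpoint when `t (i+1) = 1` (the right end of the parametric domain),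
and the usual convention `0/0 = 0` is used in the recursion. -/
def coxDeBoor (t : ℕ → ℝ) : ℕ → ℕ → ℝ → ℝ
  | 0, i, x =>
      if (t i ≤ x ∧ x < t (i + 1)) ∨ (t i < t (i + 1) ∧ t (i + 1) = 1 ∧ x = 1) then 1 else 0
  | (d + 1), i, x =>
      (if t (i + d + 1) = t i then 0 else (x - t i) / (t (i + d + 1) - t i)) *
          coxDeBoor t d i x +
        (if t (i + d + 2) = t (i + 1) then 0
          else (t (i + d + 2) - x) / (t (i + d + 2) - t (i + 1))) *
          coxDeBoor t d (i + 1) x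

/-- The open knot vector on `[0,1]` of degree `dg`:  `0` and `1` appear with
multiplicity `dg + 1` and each of the `k` inner breakpoints `τ 0 < … < τ (k-1)`
appears with multiplicity `m`. -/
def openKnots (dg m k : ℕ) (τ : ℕ → ℝ) (j : ℕ) : ℝ :=
  if j ≤ dg then 0 else if dg + k * m < j then 1 else τ ((j - (dg + 1)) / m)

/-- The `i`-th B-spline of degree `dg`, inner-knot multiplicity `m`, over the
breakpoints `τ 0, …, τ (k-1)`. -/
def Bspl (dg m k : ℕ) (τ : ℕ → ℝ) (i : ℕ) : ℝ → ℝ :=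
  coxDeBoor (openKnots dg m k τ) dg i

/-- The dimension of the corresponding spline space. -/
def sdim (dg m k : ℕ) : ℕ := dg + 1 + k * m

/-- The univariate spline space, as a subspace of `ℝ → ℝ`. -/
def splineSpace (dg m k : ℕ) (τ : ℕ → ℝ) : Submodule ℝ (ℝ → ℝ) :=
  Submodule.span ℝ (Bspl dg m k τ '' Set.Iio (sdim dg m k))

/-- The tensor-product spline space `span {g(ξ₁)h(ξ₂) : g, h ∈ S}`. -/
def tensorSpace (dg m k : ℕ) (τ : ℕ → ℝ) : Submodule ℝ (ℝ × ℝ → ℝ) :=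
  Submodule.span ℝ
    {f | ∃ g ∈ splineSpace dg m k τ, ∃ h ∈ splineSpace dg m k τ,
        f = fun q : ℝ × ℝ => g q.1 * h q.2}

/-- The parametric interval `[0,1]`. -/
def I01 : Set ℝ := Set.Icc 0 1

/-- The parametric square `[0,1]²`. -/
def sq : Set (ℝ × ℝ) := Set.Icc (0, 0) (1, 1)

/-- Derivative of a univariate function within `[0,1]` (one-sided at the endpoints). -/
def d01 (g : ℝ → ℝ) (x : ℝ) : ℝ := derivWithin g I01 x

/-- First partial derivative (within `[0,1]` in the first variable). -/
def pd1 (f : ℝ × ℝ → ℝ) (q : ℝ × ℝ) : ℝ := derivWithin (fun s => f (s, q.2)) I01 q.1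

/-- Second partial derivative (within `[0,1]` in the second variable). -/
def pd2 (f : ℝ × ℝ → ℝ) (q : ℝ × ℝ) : ℝ := derivWithin (fun s => f (q.1, s)) I01 q.2

/-- First partial derivative of a map into `ℝ²`. -/
def pd1v (F : ℝ × ℝ → ℝ × ℝ) (q : ℝ × ℝ) : ℝ × ℝ :=
  (pd1 (fun x => (F x).1) q, pd1 (fun x => (F x).2) q)

/-- Second partial derivative of a map into `ℝ²`. -/
def pd2v (F : ℝ × ℝ → ℝ × ℝ) (q : ℝ × ℝ) : ℝ × ℝ :=
  (pd2 (fun x => (F x).1) q, pd2 (fun x => (F x).2) q)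

/-- Jacobian determinant. -/
def jacDet (F : ℝ × ℝ → ℝ × ℝ) (q : ℝ × ℝ) : ℝ :=
  pd1 (fun x => (F x).1) q * pd2 (fun x => (F x).2) q -
    pd1 (fun x => (F x).2) q * pd2 (fun x => (F x).1) q

/-- The Jacobian matrix. -/
def jacMat (F : ℝ × ℝ → ℝ × ℝ) (q : ℝ × ℝ) : Matrix (Fin 2) (Fin 2) ℝ :=
  !![pd1 (fun x => (F x).1) q, pd2 (fun x => (F x).1) q;
     pd1 (fun x => (F x).2) q, pd2 (fun x => (F x).2) q]

/-- Polynomials of degree at most one ("linear functions"). -/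
def IsLinearPoly (a : ℝ → ℝ) : Prop := ∃ c₀ c₁ : ℝ, a = fun x => c₀ + c₁ * x

/-- Breakpoints extended by the endpoints `0` and `1`. -/
def extBpt (k : ℕ) (τ : ℕ → ℝ) (i : ℕ) : ℝ :=
  if i = 0 then 0 else if i ≤ k then τ (i - 1) else 1

/-- One dyadic refinement of the breakpoint set `τ 0 < … < τ (k-1)`:
the old breakpoints together with the midpoints of the `k+1` intervals
determined by `{0} ∪ T ∪ {1}`. -/
def dyadicOnce (k : ℕ) (τ : ℕ → ℝ) (j : ℕ) : ℝ :=
  if j % 2 = 1 then τ (j / 2) else (extBpt k τ (j / 2) + extBpt k τ (j / 2 + 1)) / 2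

/-- Number of breakpoints at level `ℓ`. -/
def levelK (k : ℕ) : ℕ → ℕ
  | 0 => k
  | ℓ + 1 => 2 * levelK k ℓ + 1

/-- Breakpoints at level `ℓ` (iterated dyadic refinement). -/
def levelτ (k : ℕ) (τ : ℕ → ℝ) : ℕ → ℕ → ℝ
  | 0 => τ
  | ℓ + 1 => dyadicOnce (levelK k ℓ) (levelτ k τ ℓ)

/-- Pullback of the interior basis functions: `N_i^{p,r}(ξ₁) N_j^{p,r}(ξ₂)`. -/
def fOmega (p r k : ℕ) (τ : ℕ → ℝ) (i j : ℕ) (q : ℝ × ℝ) : ℝ :=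
  Bspl p (p - r) k τ i q.1 * Bspl p (p - r) k τ j q.2

/-- Pullback of the interface basis function `φ_{Γ₀,i}` on the patch with
gluing datum `βS`. -/
def fGamma0 (p r k : ℕ) (τ : ℕ → ℝ) (βS : ℝ → ℝ) (i : ℕ) (q : ℝ × ℝ) : ℝ :=
  Bspl p (p - r - 1) k τ i q.2 *
      (Bspl p (p - r) k τ 0 q.1 + Bspl p (p - r) k τ 1 q.1) +
    βS q.2 * d01 (Bspl p (p - r - 1) k τ i) q.2 * (τ 0 / (p : ℝ)) * Bspl p (p - r) k τ 1 q.1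

/-- Pullback of the interface basis function `φ_{Γ₁,i}` on the patch with
gluing datum `αS`. -/
def fGamma1 (p r k : ℕ) (τ : ℕ → ℝ) (αS : ℝ → ℝ) (i : ℕ) (q : ℝ × ℝ) : ℝ :=
  αS q.2 * Bspl (p - 1) (p - r - 1) k τ i q.2 * Bspl p (p - r) k τ 1 q.1

/-- Support of a function on the domain `Ω`. -/
def suppOn (Ω : Set (ℝ × ℝ)) (φ : ℝ × ℝ → ℝ) : Set (ℝ × ℝ) :=
  closure {x | x ∈ Ω ∧ φ x ≠ 0}

/-- An analysis-suitable `G¹` two-patch geometry, on the spline space of degree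
`p`, regularity `r`, with `k` inner breakpoints `τ 0 < … < τ (k-1)`.  The two
geometry mappings `FL` and `FR` are regular spline parameterizations of the two
patches, and `αL, αR, βL, βR` are the linear gluing data. -/
structure ASG1 where
  p : ℕ
  r : ℕ
  k : ℕ
  τ : ℕ → ℝ
  hp : 3 ≤ p
  hr : 1 ≤ r
  hrp : r ≤ p - 2
  hτpos : ∀ i < k, 0 < τ i
  hτlt : ∀ i < k, τ i < 1
  hτmono : ∀ i, i + 1 < k → τ i < τ (i + 1)
  /-- left geometry mapping -/
  FL : ℝ × ℝ → ℝ × ℝ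
  /-- right geometry mapping -/
  FR : ℝ × ℝ → ℝ × ℝ
  hFL1 : (fun q => (FL q).1) ∈ tensorSpace p (p - r) k τ
  hFL2 : (fun q => (FL q).2) ∈ tensorSpace p (p - r) k τ
  hFR1 : (fun q => (FR q).1) ∈ tensorSpace p (p - r) k τ
  hFR2 : (fun q => (FR q).2) ∈ tensorSpace p (p - r) k τ
  hFLc1 : ContDiffOn ℝ 1 FL sq
  hFRc1 : ContDiffOn ℝ 1 FR sq
  hFLinj : Set.InjOn FL sq
  hFRinj : Set.InjOn FR sq
  hFLjac : ∀ q ∈ sq, jacDet FL q ≠ 0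
  hFRjac : ∀ q ∈ sq, jacDet FR q ≠ 0
  /-- the two patches share the interface `ξ₁ = 0` -/
  hIface : ∀ ξ ∈ I01, FL (0, ξ) = FR (0, ξ)
  /-- the patches intersect exactly in the common interface -/
  hGamma : FL '' sq ∩ FR '' sq = (fun ξ : ℝ => FL (0, ξ)) '' I01
  /-- gluing data -/
  αL : ℝ → ℝ
  αR : ℝ → ℝ
  βL : ℝ → ℝ
  βR : ℝ → ℝ
  hαLlin : IsLinearPoly αL
  hαRlin : IsLinearPoly αR
  hβLlin : IsLinearPoly βL
  hβRlin : IsLinearPoly βR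
  hαneg : ∀ ξ ∈ I01, αL ξ * αR ξ < 0
  /-- the analysis-suitable `G¹` condition -/
  hG1 : ∀ ξ ∈ I01,
      αR ξ • pd1v FL (0, ξ) - αL ξ • pd1v FR (0, ξ) +
          (αL ξ * βR ξ - αR ξ * βL ξ) • pd2v FL (0, ξ) = 0

/-- The function `β = α^(L) β^(R) − α^(R) β^(L)`. -/
def ASG1.beta (G : ASG1) : ℝ → ℝ := fun ξ => G.αL ξ * G.βR ξ - G.αR ξ * G.βL ξ

/-- The left patch `Ω^(L)`. -/
def ASG1.ΩL (G : ASG1) : Set (ℝ × ℝ) := G.FL '' sq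

/-- The right patch `Ω^(R)`. -/
def ASG1.ΩR (G : ASG1) : Set (ℝ × ℝ) := G.FR '' sq

/-- The two-patch domain `Ω = Ω^(L) ∪ Ω^(R)`. -/
def ASG1.dom (G : ASG1) : Set (ℝ × ℝ) := G.ΩL ∪ G.ΩR

/-- The interface `Γ`. -/
def ASG1.iface (G : ASG1) : Set (ℝ × ℝ) := (fun ξ : ℝ => G.FL (0, ξ)) '' I01

-- The function on `Ω` whose pullbacks to the two patches are `fL` and `fR`
-- (extended by `0` outside `Ω`).
open Classical in
def ASG1.glue (G : ASG1) (fL fR : ℝ × ℝ → ℝ) (x : ℝ × ℝ) : ℝ :=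
  if x ∈ G.ΩL then fL (Function.invFunOn G.FL sq x)
  else if x ∈ G.ΩR then fR (Function.invFunOn G.FR sq x)
  else 0

/-- Indices for the basis `Φ` of the `C¹` space `W`. -/
inductive PhiIdx where
  | inL (i j : ℕ) : PhiIdx
  | inR (i j : ℕ) : PhiIdx
  | g0 (i : ℕ) : PhiIdx
  | g1 (i : ℕ) : PhiIdx

/-- The valid index ranges for the basis `Φ` (for degree `p`, regularity `r`,
`k` inner breakpoints). -/
def PhiIdx.valid (p r k : ℕ) : PhiIdx → Prop
  | .inL i j => 2 ≤ i ∧ i < sdim p (p - r) k ∧ j < sdim p (p - r) k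
  | .inR i j => 2 ≤ i ∧ i < sdim p (p - r) k ∧ j < sdim p (p - r) k
  | .g0 i => i < sdim p (p - r - 1) k
  | .g1 i => i < sdim (p - 1) (p - r - 1) k

/-- The basis functions of the `C¹` space `W`, for breakpoints `τ' 0 < … < τ' (k'-1)`. -/
def ASG1.phiAt (G : ASG1) (k' : ℕ) (τ' : ℕ → ℝ) : PhiIdx → ℝ × ℝ → ℝ
  | .inL i j => G.glue (fOmega G.p G.r k' τ' i j) (fun _ => 0)
  | .inR i j => G.glue (fun _ => 0) (fOmega G.p G.r k' τ' i j)
  | .g0 i => G.glue (fGamma0 G.p G.r k' τ' G.βL i) (fGamma0 G.p G.r k' τ' G.βR i)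
  | .g1 i => G.glue (fGamma1 G.p G.r k' τ' G.αL i) (fGamma1 G.p G.r k' τ' G.αR i)

/-- The level-`ℓ` basis functions. -/
def ASG1.phiLvl (G : ASG1) (ℓ : ℕ) : PhiIdx → ℝ × ℝ → ℝ :=
  G.phiAt (levelK G.k ℓ) (levelτ G.k G.τ ℓ)

/-- The level-`ℓ` basis `Φ^ℓ`, as a set of functions on the two-patch domain. -/
def ASG1.PhiSetLvl (G : ASG1) (ℓ : ℕ) : Set (ℝ × ℝ → ℝ) :=
  G.phiLvl ℓ '' {e | e.valid G.p G.r (levelK G.k ℓ)}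

/-- The basis `Φ` (level `0`). -/
def ASG1.PhiSet (G : ASG1) : Set (ℝ × ℝ → ℝ) := G.PhiSetLvl 0

/-! The second B-spline `N₁^{p,r}` vanishes at `0`, the left end knot having multiplicity `p + 1`.
Hence `f^(S) = α^(S) (N_i^{p-1,r} ∘ ξ₂) (N₁^{p,r} ∘ ξ₁)` vanishes on `ξ₁ = 0` together with its
`ξ₂`-derivative, while `∂₁f^(S)(0, ξ₂) = α^(S)(ξ₂) c(ξ₂)` with `c` independent of `S`; this gives
(a) and (b). For (c), both Jacobians have the interface tangent `u = ∂₂F₀` as second column, so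
both transposed inverses send `(1, 0)` to multiples of the conormal `(u₂, -u₁)`, and taking
determinants in the `G¹` relation gives `α^(R) det J_L = α^(L) det J_R`, which matches the
multiples. -/

lemma coxDeBoor_eq_zero_of_lt_knot (t : ℕ → ℝ) {x : ℝ} :
    ∀ d i, (∀ j, i ≤ j → j < i + d → t j = x) → x < t (i + d) → coxDeBoor t d i x = 0
  | 0, i, _, hlt => by
    rw [coxDeBoor, if_neg]
    rintro (⟨hle, -⟩ | ⟨hlt', hone, rfl⟩) <;> simp only [add_zero] at hlt <;> linarith
  | d + 1, i, hknots, hlt => by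
    have hti : t i = x := hknots i le_rfl (by omega)
    have hnext : coxDeBoor t d (i + 1) x = 0 :=
      coxDeBoor_eq_zero_of_lt_knot t d (i + 1)
        (fun j hj hj' => hknots j (by omega) (by omega)) (by rwa [add_right_comm, add_assoc])
    rw [coxDeBoor, hnext, hti, sub_self, zero_div, mul_zero, add_zero]
    split_ifs <;> simp

lemma Bspl_one_apply_zero (p m k : ℕ) (τ : ℕ → ℝ) (hτ : 0 < k → 0 < τ 0) :
    Bspl p m k τ 1 0 = 0 := by
  refine coxDeBoor_eq_zero_of_lt_knot _ p 1 (fun j _ hj => if_pos (by omega)) ?_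
  rw [openKnots, if_neg (by omega)]
  split_ifs with hend
  · exact one_pos
  · have hk : 0 < k := Nat.pos_of_ne_zero (by rintro rfl; omega)
    simpa [add_comm 1 p] using hτ hk

section fGamma1

variable {p r k : ℕ} {τ : ℕ → ℝ} (αS : ℝ → ℝ) (i : ℕ)

lemma fGamma1_zero_left (hτ : 0 < k → 0 < τ 0) (ξ : ℝ) : fGamma1 p r k τ αS i (0, ξ) = 0 := by
  simp [fGamma1, Bspl_one_apply_zero p (p - r) k τ hτ]

lemma pd2_fGamma1_zero_left (hτ : 0 < k → 0 < τ 0) (ξ : ℝ) :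
    pd2 (fGamma1 p r k τ αS i) (0, ξ) = 0 := by
  simp only [pd2, fGamma1_zero_left αS i hτ, derivWithin_fun_const, Pi.zero_apply]

lemma pd1_fGamma1_zero_left (ξ : ℝ) :
    pd1 (fGamma1 p r k τ αS i) (0, ξ) =
      αS ξ * (Bspl (p - 1) (p - r - 1) k τ i ξ * d01 (Bspl p (p - r) k τ 1) 0) := by
  rw [← mul_assoc]
  exact derivWithin_const_mul_field (αS ξ * Bspl (p - 1) (p - r - 1) k τ i ξ)

end fGamma1

lemma zero_prod_mem_sq {ξ : ℝ} (hξ : ξ ∈ I01) : ((0 : ℝ), ξ) ∈ sq :=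
  ⟨⟨le_rfl, hξ.1⟩, ⟨zero_le_one, hξ.2⟩⟩

lemma pd2_congr {f g : ℝ × ℝ → ℝ} {x ξ : ℝ} (h : ∀ s ∈ I01, f (x, s) = g (x, s))
    (hξ : ξ ∈ I01) : pd2 f (x, ξ) = pd2 g (x, ξ) :=
  derivWithin_congr h (h ξ hξ)

lemma det_jacMat (F : ℝ × ℝ → ℝ × ℝ) (q : ℝ × ℝ) : (jacMat F q).det = jacDet F q := by
  rw [jacMat, Matrix.det_fin_two_of, jacDet]
  ring

section Matrix

open Matrix

lemma inv_transpose_mulVec_eq_of_col_one_eq {A B : Matrix (Fin 2) (Fin 2) ℝ}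
    {a₁ a₂ b c : ℝ} (hcol : ∀ j, B j 1 = A j 1)
    (hrel : ∀ j, a₂ * A j 0 - a₁ * B j 0 + b * A j 1 = 0)
    (hA : A.det ≠ 0) (hB : B.det ≠ 0) :
    (Aᵀ)⁻¹ *ᵥ ![a₁ * c, 0] = (Bᵀ)⁻¹ *ᵥ ![a₂ * c, 0] := by
  have hdet : a₂ * A.det = a₁ * B.det := by
    rw [det_fin_two, det_fin_two, hcol 0, hcol 1]
    linear_combination A 1 1 * hrel 0 - A 0 1 * hrel 1
  set w : Fin 2 → ℝ := (a₁ * c / A.det) • ![A 1 1, -A 0 1]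
  have hAw : Aᵀ *ᵥ w = ![a₁ * c, 0] := by
    ext j
    fin_cases j <;>
      simp only [mulVec, dotProduct, Fin.zero_eta, Fin.mk_one, Fin.isValue, transpose_apply,
        smul_cons, Nat.succ_eq_add_one, Nat.reduceAdd, smul_eq_mul, mul_neg, Matrix.smul_empty,
        Fin.sum_univ_two, cons_val_zero, cons_val_one, cons_val_fin_one, w]
    · field_simp
      linear_combination (a₁ * c) * (det_fin_two A).symm
    · ring
  have hBw : Bᵀ *ᵥ w = ![a₂ * c, 0] := by
    ext j
    fin_cases j <;>
      simp only [mulVec, dotProduct, Fin.zero_eta, Fin.mk_one, Fin.isValue, transpose_apply,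
        smul_cons, Nat.succ_eq_add_one, Nat.reduceAdd, smul_eq_mul, mul_neg, Matrix.smul_empty,
        Fin.sum_univ_two, cons_val_zero, cons_val_one, cons_val_fin_one, w, hcol]
    · field_simp
      have hdetB : B.det = B 0 0 * A 1 1 - A 0 1 * B 1 0 := by rw [det_fin_two, hcol 0, hcol 1]
      linear_combination c * hdet.symm - (a₁ * c) * hdetB
    · ring
  have hinv (M : Matrix (Fin 2) (Fin 2) ℝ) (hM : M.det ≠ 0) : (Mᵀ)⁻¹ *ᵥ (Mᵀ *ᵥ w) = w := by
    rw [mulVec_mulVec, nonsing_inv_mul _ (by simpa using hM), one_mulVec]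
  rw [← hAw, ← hBw, hinv A hA, hinv B hB]

end Matrix

namespace ASG1

variable (G : ASG1)

lemma glue_FL {fL fR : ℝ × ℝ → ℝ} {q : ℝ × ℝ} (hq : q ∈ sq) : G.glue fL fR (G.FL q) = fL q := by
  rw [glue, if_pos ⟨q, hq, rfl⟩, G.hFLinj.leftInvOn_invFunOn hq]

lemma glue_FR {fL fR : ℝ × ℝ → ℝ} (hLR : ∀ ξ ∈ I01, fL (0, ξ) = fR (0, ξ)) {q : ℝ × ℝ}
    (hq : q ∈ sq) : G.glue fL fR (G.FR q) = fR q := by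
  by_cases hL : G.FR q ∈ G.ΩL
  · obtain ⟨ξ, hξ, hξq⟩ : ∃ ξ ∈ I01, G.FL (0, ξ) = G.FR q := by
      rw [← mem_image, ← G.hGamma]
      exact ⟨hL, q, hq, rfl⟩
    have hq0 : q = (0, ξ) := G.hFRinj hq (zero_prod_mem_sq hξ) (by rw [← hξq, G.hIface ξ hξ])
    subst hq0
    rw [← hξq, G.glue_FL (zero_prod_mem_sq hξ), hLR ξ hξ]
  · rw [glue, if_neg hL, if_pos ⟨q, hq, rfl⟩, G.hFRinj.leftInvOn_invFunOn hq]

lemma jacMat_FR_col_one {ξ : ℝ} (hξ : ξ ∈ I01) (j : Fin 2) :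
    jacMat G.FR (0, ξ) j 1 = jacMat G.FL (0, ξ) j 1 := by
  fin_cases j <;>
    simp only [jacMat, Fin.zero_eta, Fin.mk_one, Fin.isValue, Matrix.of_apply, Matrix.cons_val',
      Matrix.cons_val_zero, Matrix.cons_val_one, Matrix.cons_val_fin_one] <;>
    exact pd2_congr (fun s hs => by rw [G.hIface s hs]) hξ

lemma G1_jacMat {ξ : ℝ} (hξ : ξ ∈ I01) (j : Fin 2) :
    G.αR ξ * jacMat G.FL (0, ξ) j 0 - G.αL ξ * jacMat G.FR (0, ξ) j 0 +
      G.beta ξ * jacMat G.FL (0, ξ) j 1 = 0 := by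
  have h := G.hG1 ξ hξ
  fin_cases j
  · simpa [jacMat, beta, pd1v, pd2v] using congrArg Prod.fst h
  · simpa [jacMat, beta, pd1v, pd2v] using congrArg Prod.snd h

end ASG1

theorem gamma1_wellDefined_and_C1_general (G : ASG1) (i : ℕ) :
    -- (a) both pullbacks vanish on the interface …
    (∀ ξ ∈ I01,
      fGamma1 G.p G.r G.k G.τ G.αL i (0, ξ) = 0 ∧
      fGamma1 G.p G.r G.k G.τ G.αR i (0, ξ) = 0) ∧
    -- … so they define a single function `φ_{Γ₁,i}` on `Ω`, vanishing on `Γ`,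
    -- with `φ_{Γ₁,i} ∘ F^(S) = f^(S)` on `[0,1]²` for both patches
    (∀ q ∈ sq,
      G.glue (fGamma1 G.p G.r G.k G.τ G.αL i) (fGamma1 G.p G.r G.k G.τ G.αR i) (G.FL q) =
        fGamma1 G.p G.r G.k G.τ G.αL i q) ∧
    (∀ q ∈ sq,
      G.glue (fGamma1 G.p G.r G.k G.τ G.αL i) (fGamma1 G.p G.r G.k G.τ G.αR i) (G.FR q) =
        fGamma1 G.p G.r G.k G.τ G.αR i q) ∧
    (∀ x ∈ G.iface,
      G.glue (fGamma1 G.p G.r G.k G.τ G.αL i) (fGamma1 G.p G.r G.k G.τ G.αR i) x = 0) ∧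
    -- (b) the `G¹` gluing relation
    (∀ ξ ∈ I01,
      G.αR ξ * pd1 (fGamma1 G.p G.r G.k G.τ G.αL i) (0, ξ) -
          G.αL ξ * pd1 (fGamma1 G.p G.r G.k G.τ G.αR i) (0, ξ) +
          G.beta ξ * pd2 (fGamma1 G.p G.r G.k G.τ G.αL i) (0, ξ) = 0) ∧
    -- (c) the gradients of the two patchwise pieces agree along the interface
    (∀ ξ ∈ I01,
      ((jacMat G.FL (0, ξ)).transpose)⁻¹.mulVec
          ![pd1 (fGamma1 G.p G.r G.k G.τ G.αL i) (0, ξ),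
            pd2 (fGamma1 G.p G.r G.k G.τ G.αL i) (0, ξ)] =
        ((jacMat G.FR (0, ξ)).transpose)⁻¹.mulVec
          ![pd1 (fGamma1 G.p G.r G.k G.τ G.αR i) (0, ξ),
            pd2 (fGamma1 G.p G.r G.k G.τ G.αR i) (0, ξ)]) := by
  have hτ : 0 < G.k → 0 < G.τ 0 := G.hτpos 0
  have hvan (αS : ℝ → ℝ) (ξ : ℝ) : fGamma1 G.p G.r G.k G.τ αS i (0, ξ) = 0 :=
    fGamma1_zero_left αS i hτ ξ
  refine ⟨fun ξ _ => ⟨hvan _ ξ, hvan _ ξ⟩, fun q hq => G.glue_FL hq,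
    fun q hq => G.glue_FR (fun ξ _ => by rw [hvan, hvan]) hq, ?_, fun ξ _ => ?_, fun ξ hξ => ?_⟩
  · rintro _ ⟨ξ, hξ, rfl⟩
    rw [G.glue_FL (zero_prod_mem_sq hξ), hvan]
  · rw [pd1_fGamma1_zero_left, pd1_fGamma1_zero_left, pd2_fGamma1_zero_left _ _ hτ]
    ring
  · rw [pd1_fGamma1_zero_left, pd1_fGamma1_zero_left, pd2_fGamma1_zero_left _ _ hτ,
      pd2_fGamma1_zero_left _ _ hτ]
    have hdet (F) (hF : ∀ q ∈ sq, jacDet F q ≠ 0) : (jacMat F (0, ξ)).det ≠ 0 := by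
      rw [det_jacMat]; exact hF _ (zero_prod_mem_sq hξ)
    exact inv_transpose_mulVec_eq_of_col_one_eq (G.jacMat_FR_col_one hξ) (G.G1_jacMat hξ)
      (hdet _ G.hFLjac) (hdet _ G.hFRjac)

/-- For each `i ∈ I₁`, the patchwise prescriptions
`f^(S) = φ_{Γ₁,i} ∘ F^(S)` vanish along `ξ₁ = 0`, hence define a single
function `φ_{Γ₁,i}` on `Ω` vanishing on the interface `Γ`; they satisfy the
`G¹` gluing relation, and therefore the gradients of the two patchwise pieces
agree along the interface. -/
theorem gamma1_wellDefined_and_C1 (G : ASG1) (i : ℕ)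
    (hi : i < sdim (G.p - 1) (G.p - G.r - 1) G.k) :
    -- (a) both pullbacks vanish on the interface …
    (∀ ξ ∈ I01,
      fGamma1 G.p G.r G.k G.τ G.αL i (0, ξ) = 0 ∧
      fGamma1 G.p G.r G.k G.τ G.αR i (0, ξ) = 0) ∧
    -- … so they define a single function `φ_{Γ₁,i}` on `Ω`, vanishing on `Γ`,
    -- with `φ_{Γ₁,i} ∘ F^(S) = f^(S)` on `[0,1]²` for both patches
    (∀ q ∈ sq,
      G.glue (fGamma1 G.p G.r G.k G.τ G.αL i) (fGamma1 G.p G.r G.k G.τ G.αR i) (G.FL q) =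
        fGamma1 G.p G.r G.k G.τ G.αL i q) ∧
    (∀ q ∈ sq,
      G.glue (fGamma1 G.p G.r G.k G.τ G.αL i) (fGamma1 G.p G.r G.k G.τ G.αR i) (G.FR q) =
        fGamma1 G.p G.r G.k G.τ G.αR i q) ∧
    (∀ x ∈ G.iface,
      G.glue (fGamma1 G.p G.r G.k G.τ G.αL i) (fGamma1 G.p G.r G.k G.τ G.αR i) x = 0) ∧
    -- (b) the `G¹` gluing relation
    (∀ ξ ∈ I01,
      G.αR ξ * pd1 (fGamma1 G.p G.r G.k G.τ G.αL i) (0, ξ) -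
          G.αL ξ * pd1 (fGamma1 G.p G.r G.k G.τ G.αR i) (0, ξ) +
          G.beta ξ * pd2 (fGamma1 G.p G.r G.k G.τ G.αL i) (0, ξ) = 0) ∧
    -- (c) the gradients of the two patchwise pieces agree along the interface
    (∀ ξ ∈ I01,
      ((jacMat G.FL (0, ξ)).transpose)⁻¹.mulVec
          ![pd1 (fGamma1 G.p G.r G.k G.τ G.αL i) (0, ξ),
            pd2 (fGamma1 G.p G.r G.k G.τ G.αL i) (0, ξ)] =
        ((jacMat G.FR (0, ξ)).transpose)⁻¹.mulVec
          ![pd1 (fGamma1 G.p G.r G.k G.τ G.αR i) (0, ξ),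
            pd2 (fGamma1 G.p G.r G.k G.τ G.αR i) (0, ξ)]) :=
  gamma1_wellDefined_and_C1_general G i

end TwoPatch
end
end

section
/- The family of univariate functions {N₀^{p,r} + N₁^{p,r}, N₁^{p,r}} ∪ {N_i^{p,r} : i ∈ I, i ≥ 2} on [0,1] is locally linearly independent: for every open O ⊆ ℝ with O ∩ [0,1] ≠ ∅, those functions of the family that do not vanish identically on O ∩ [0,1] are linearly independent as functions on O ∩ [0,1]. -/
/-!
On a knot span `(t μ, t (μ + 1))` of positive length, the degree-`d` B-splines `N_{μ-d}, …, N_μ`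
agree with polynomials that are linearly independent: differentiating a vanishing combination
gives a vanishing combination of the degree-`(d-1)` pieces whose coefficients are weighted
consecutive differences, so by induction the coefficients are constant, and the partition of
unity forces the constant to be zero. An open set meeting the support of a B-spline contains
an open piece of such a span inside that support, which gives local linear independence of
the B-splines. As the inner knots have multiplicity `p - r ≥ 2`, both `N₀` and `N₁` are
supported in the first knot span `[0, τ₀]`, so the unimodular change `(N₀, N₁) ↦ (N₀ + N₁, N₁)`
keeps the family locally linearly independent.
-/

noncomputable section
open Set

namespace TwoPatch



/-- The modified univariate family `{N₀ + N₁, N₁} ∪ {N_i : i ≥ 2}`. -/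
def modFam (p r k : ℕ) (τ : ℕ → ℝ) (i : ℕ) : ℝ → ℝ :=
  if i = 0 then fun x => Bspl p (p - r) k τ 0 x + Bspl p (p - r) k τ 1 x
  else Bspl p (p - r) k τ i

section CoxDeBoor

variable {t : ℕ → ℝ}

theorem coxDeBoor_eq_zero_of_notMem_Icc (ht : Monotone t) {d i : ℕ} {x : ℝ}
    (hx : x ∉ Icc (t i) (t (i + d + 1))) : coxDeBoor t d i x = 0 := by
  induction d generalizing i with
  | zero =>
    simp only [mem_Icc, not_and_or, not_le] at hx
    rw [coxDeBoor, if_neg]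
    rintro (⟨h₁, h₂⟩ | ⟨h₁, h₂, rfl⟩) <;> rcases hx with hx | hx <;> linarith
  | succ d ih =>
    have h₁ : x ∉ Icc (t i) (t (i + d + 1)) := fun h => hx ⟨h.1, h.2.trans (ht (by omega))⟩
    have h₂ : x ∉ Icc (t (i + 1)) (t (i + 1 + d + 1)) :=
      fun h => hx ⟨(ht (by omega)).trans h.1, h.2.trans (ht (by omega))⟩
    rw [coxDeBoor, ih h₁, ih h₂, mul_zero, mul_zero, add_zero]

theorem coxDeBoor_eq_zero_of_knot_eq (ht : Monotone t) {d i : ℕ} (h : t (i + d + 1) = t i)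
    (x : ℝ) : coxDeBoor t d i x = 0 := by
  induction d generalizing i with
  | zero =>
    rw [coxDeBoor, if_neg]
    rintro (⟨h₁, h₂⟩ | ⟨h₁, -, -⟩) <;> linarith
  | succ d ih =>
    have h₁ : t (i + d + 1) = t i :=
      le_antisymm (h ▸ ht (by omega)) (ht (by omega))
    have h₂ : t (i + 1 + d + 1) = t (i + 1) :=
      le_antisymm ((ht (by omega)).trans (h.trans_le (ht (by omega)))) (ht (by omega))
    rw [coxDeBoor, ih h₁, ih h₂, mul_zero, mul_zero, add_zero]

theorem mem_Icc_of_coxDeBoor_ne_zero (ht : Monotone t) {d i : ℕ} {x : ℝ}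
    (h : coxDeBoor t d i x ≠ 0) : x ∈ Icc (t i) (t (i + d + 1)) := by
  by_contra hx
  exact h (coxDeBoor_eq_zero_of_notMem_Icc ht hx)

theorem knot_lt_of_coxDeBoor_ne_zero (ht : Monotone t) {d i : ℕ} {x : ℝ}
    (h : coxDeBoor t d i x ≠ 0) : t i < t (i + d + 1) :=
  (ht (by omega)).lt_of_ne fun he => h (coxDeBoor_eq_zero_of_knot_eq ht he.symm x)

theorem exists_knotSpan_of_mem_Ico (ht : Monotone t) {lo hi : ℕ} {y : ℝ}
    (hy : y ∈ Ico (t lo) (t hi)) : ∃ μ ∈ Ico lo hi, y ∈ Ico (t μ) (t (μ + 1)) := by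
  induction hi with
  | zero => exact absurd (hy.1.trans_lt hy.2) (not_lt.2 (ht (Nat.zero_le lo)))
  | succ h ih =>
    by_cases hyh : y < t h
    · obtain ⟨μ, hμ, hyμ⟩ := ih ⟨hy.1, hyh⟩
      exact ⟨μ, ⟨hμ.1, hμ.2.trans h.lt_succ_self⟩, hyμ⟩
    · refine ⟨h, ⟨?_, h.lt_succ_self⟩, not_lt.1 hyh, hy.2⟩
      by_contra hlo
      exact absurd (hy.1.trans_lt hy.2) (not_lt.2 (ht (by omega)))

end CoxDeBoor

theorem sum_range_comp_succ_eq_of_eq_zero {M : Type*} [AddCommMonoid M] {n : ℕ} {v : ℕ → M}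
    (h₀ : v 0 = 0) (hn : v n = 0) :
    ∑ i ∈ Finset.range n, v (i + 1) = ∑ i ∈ Finset.range n, v i := by
  have h := Finset.sum_range_succ' v n
  rw [Finset.sum_range_succ, hn, h₀, add_zero, add_zero] at h
  exact h.symm

section SpanPoly

open Polynomial

variable {t : ℕ → ℝ} {μ n : ℕ}

/-- The polynomial that agrees with `coxDeBoor t d i` on the knot span `(t μ, t (μ + 1))`. -/
def spanPoly (t : ℕ → ℝ) (μ : ℕ) : ℕ → ℕ → ℝ[X]
  | 0, i => if i = μ then 1 else 0
  | d + 1, i =>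
      C (t (i + d + 1) - t i)⁻¹ * (X - C (t i)) * spanPoly t μ d i +
        C (t (i + d + 2) - t (i + 1))⁻¹ * (C (t (i + d + 2)) - X) * spanPoly t μ d (i + 1)

theorem spanPoly_eq_zero_of_lt (d : ℕ) {i : ℕ} (h : μ < i ∨ i + d < μ) :
    spanPoly t μ d i = 0 := by
  induction d generalizing i with
  | zero => simp only [spanPoly, if_neg (by omega : i ≠ μ)]
  | succ d ih => simp only [spanPoly, ih (by omega : μ < i ∨ i + d < μ),
      ih (by omega : μ < i + 1 ∨ i + 1 + d < μ), mul_zero, add_zero]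

theorem spanPoly_eq_zero_of_knot_eq (ht : Monotone t) (hspan : t μ < t (μ + 1)) {d i : ℕ}
    (h : t (i + d + 1) = t i) : spanPoly t μ d i = 0 := by
  refine spanPoly_eq_zero_of_lt d (by_contra fun hc => hspan.not_ge ?_)
  calc t (μ + 1) ≤ t (i + d + 1) := ht (by omega)
    _ = t i := h
    _ ≤ t μ := ht (by omega)

theorem coxDeBoor_eq_eval_spanPoly (ht : Monotone t) {x : ℝ} (hx : x ∈ Ioo (t μ) (t (μ + 1)))
    (d i : ℕ) : coxDeBoor t d i x = (spanPoly t μ d i).eval x := by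
  induction d generalizing i with
  | zero =>
    obtain ⟨hx₁, hx₂⟩ := hx
    simp only [coxDeBoor, spanPoly]
    rcases lt_trichotomy i μ with h | rfl | h
    · have : t (i + 1) ≤ t μ := ht h
      rw [if_neg h.ne, if_neg (by rintro (⟨-, _⟩ | ⟨-, _, rfl⟩) <;> linarith), eval_zero]
    · rw [if_pos rfl, if_pos (Or.inl ⟨hx₁.le, hx₂⟩), eval_one]
    · have : t (μ + 1) ≤ t i := ht h
      rw [if_neg h.ne', if_neg (by rintro (⟨_, -⟩ | ⟨_, _, rfl⟩) <;> linarith), eval_zero]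
  | succ d ih =>
    simp only [coxDeBoor, spanPoly, eval_add, eval_mul, eval_sub, eval_C, eval_X, ih]
    congr 2 <;> split_ifs with h <;> simp [h, div_eq_inv_mul]

theorem inv_knot_sub_mul_eq (ht : Monotone t) (i d : ℕ) :
    (t (i + d + 2) - t (i + 1))⁻¹ *
      ((t (i + d + 2) - t i)⁻¹ * (t (i + d + 2) - t i) -
        (t (i + d + 3) - t (i + 1))⁻¹ * (t (i + d + 3) - t (i + 1))) = 0 := by
  rcases (ht (by omega : i + 1 ≤ i + d + 2)).eq_or_lt with h | h
  · simp [← h]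
  · have h₁ : t (i + d + 2) - t i ≠ 0 := by linarith [ht (by omega : i ≤ i + 1)]
    have h₂ : t (i + d + 3) - t (i + 1) ≠ 0 := by linarith [ht (by omega : i + d + 2 ≤ i + d + 3)]
    rw [inv_mul_cancel₀ h₁, inv_mul_cancel₀ h₂, sub_self, mul_zero]

theorem derivative_spanPoly (ht : Monotone t) (d i : ℕ) :
    derivative (spanPoly t μ (d + 1) i) = C ((d : ℝ) + 1) *
      (C (t (i + d + 1) - t i)⁻¹ * spanPoly t μ d i -
        C (t (i + d + 2) - t (i + 1))⁻¹ * spanPoly t μ d (i + 1)) := by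
  induction d generalizing i with
  | zero =>
    simp only [spanPoly]
    split_ifs <;> simp only [derivative_mul, derivative_add, derivative_sub, derivative_C,
      derivative_X, derivative_zero, derivative_one, Nat.cast_zero, zero_add, C_1] <;> ring
  | succ d ih =>
    rw [spanPoly, derivative_add, derivative_mul, derivative_mul, derivative_mul,
      derivative_mul, ih, ih]
    simp only [spanPoly, derivative_C, derivative_sub, derivative_X]
    have key := congrArg C (inv_knot_sub_mul_eq ht i d)
    simp only [map_mul, map_sub, map_zero] at key
    simp only [show i + (d + 1) + 1 = i + d + 2 by omega,
      show i + (d + 1) + 2 = i + d + 3 by omega, show i + 1 + d + 1 = i + d + 2 by omega,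
      show i + 1 + d + 2 = i + d + 3 by omega, show i + 1 + 1 = i + 2 by omega,
      Nat.cast_add, Nat.cast_one, map_add, map_one, map_natCast]
    linear_combination (-(d : ℝ[X]) - 1) * spanPoly t μ d (i + 1) * key

theorem sum_spanPoly_eq_one (ht : Monotone t) (hspan : t μ < t (μ + 1)) (hμn : μ < n)
    {d : ℕ} (hdμ : d ≤ μ) : ∑ i ∈ Finset.range n, spanPoly t μ d i = 1 := by
  induction d with
  | zero => simp [spanPoly, hμn]
  | succ d ih =>
    set v : ℕ → ℝ[X] := fun i => C (t (i + d + 1) - t i)⁻¹ * (C (t (i + d + 1)) - X) *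
      spanPoly t μ d i
    have hL₀ : spanPoly t μ d 0 = 0 := spanPoly_eq_zero_of_lt d (by omega)
    have hLn : spanPoly t μ d n = 0 := spanPoly_eq_zero_of_lt d (by omega)
    have hshift : ∑ i ∈ Finset.range n, v (i + 1) = ∑ i ∈ Finset.range n, v i :=
      sum_range_comp_succ_eq_of_eq_zero (by simp [v, hL₀]) (by simp [v, hLn])
    simp only [v, show ∀ i, i + 1 + d + 1 = i + d + 2 by omega] at hshift
    simp only [spanPoly, Finset.sum_add_distrib, hshift]
    rw [← ih (by omega), ← Finset.sum_add_distrib]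
    refine Finset.sum_congr rfl fun i _ => ?_
    rcases eq_or_ne (t (i + d + 1)) (t i) with h | h
    · simp [spanPoly_eq_zero_of_knot_eq ht hspan h]
    · have hw := congrArg C (inv_mul_cancel₀ (sub_ne_zero.2 h))
      simp only [map_mul, map_sub, map_one] at hw
      linear_combination spanPoly t μ d i * hw

theorem spanPoly_coeff_eq_zero (ht : Monotone t) (hspan : t μ < t (μ + 1)) (hμn : μ < n)
    {d : ℕ} (hdμ : d ≤ μ) {c : ℕ → ℝ}
    (h : ∑ i ∈ Finset.range n, C (c i) * spanPoly t μ d i = 0) {j : ℕ} (hj : μ ≤ j + d)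
    (hjμ : j ≤ μ) : c j = 0 := by
  induction d generalizing c j with
  | zero =>
    obtain rfl : j = μ := by omega
    simpa [spanPoly, hμn] using h
  | succ d ih =>
    set v : ℕ → ℝ[X] := fun i => C (((d : ℝ) + 1) * c (i - 1) * (t (i + d + 1) - t i)⁻¹) *
      spanPoly t μ d i
    have hL₀ : spanPoly t μ d 0 = 0 := spanPoly_eq_zero_of_lt d (by omega)
    have hLn : spanPoly t μ d n = 0 := spanPoly_eq_zero_of_lt d (by omega)
    have hshift : ∑ i ∈ Finset.range n, v (i + 1) = ∑ i ∈ Finset.range n, v i :=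
      sum_range_comp_succ_eq_of_eq_zero (by simp [v, hL₀]) (by simp [v, hLn])
    have hder : ∑ i ∈ Finset.range n,
        C (((d : ℝ) + 1) * (c i - c (i - 1)) * (t (i + d + 1) - t i)⁻¹) * spanPoly t μ d i
          = 0 := by
      have h' := congrArg derivative h
      simp only [derivative_sum, derivative_mul, derivative_C, zero_mul, zero_add,
        derivative_spanPoly ht, derivative_zero] at h'
      rw [← h']
      calc _ = ∑ i ∈ Finset.range n,
              C (((d : ℝ) + 1) * c i * (t (i + d + 1) - t i)⁻¹) * spanPoly t μ d i -
            ∑ i ∈ Finset.range n, v i := by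
            rw [← Finset.sum_sub_distrib]
            refine Finset.sum_congr rfl fun i _ => ?_
            simp only [v, map_mul, map_sub]
            ring
        _ = _ := by
            rw [← hshift, ← Finset.sum_sub_distrib]
            refine Finset.sum_congr rfl fun i _ => ?_
            simp only [v, Nat.add_sub_cancel, show i + 1 + d + 1 = i + d + 2 by omega, map_mul,
              map_add, map_one, map_natCast]
            ring
    have hstep : ∀ i, μ ≤ i + d → i ≤ μ → c i = c (i - 1) := by
      intro i hi hiμ
      have hw : t (i + d + 1) - t i ≠ 0 := by
        linarith [ht (by omega : i ≤ μ), ht (by omega : μ + 1 ≤ i + d + 1)]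
      have := ih (by omega) hder hi hiμ
      simp only [mul_eq_zero, inv_eq_zero, hw, sub_eq_zero, or_false] at this
      exact this.resolve_left (by positivity)
    have hconst : ∀ k ≤ d + 1, c (μ - k) = c μ := by
      intro k hk
      induction k with
      | zero => rfl
      | succ k ihk =>
        rw [← ihk (by omega), hstep (μ - k) (by omega) (by omega), Nat.sub_sub]
    have hcμ : c μ = 0 := by
      have hsum : ∑ i ∈ Finset.range n, C (c i) * spanPoly t μ (d + 1) i =
          C (c μ) * ∑ i ∈ Finset.range n, spanPoly t μ (d + 1) i := by
        rw [Finset.mul_sum]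
        refine Finset.sum_congr rfl fun i _ => ?_
        by_cases hi : μ ≤ i + (d + 1) ∧ i ≤ μ
        · rw [← hconst (μ - i) (by omega), Nat.sub_sub_self hi.2]
        · rw [spanPoly_eq_zero_of_lt (d + 1) (by omega), mul_zero, mul_zero]
      rwa [hsum, sum_spanPoly_eq_one ht hspan hμn hdμ, mul_one, C_eq_zero] at h
    rw [← Nat.sub_sub_self hjμ, hconst (μ - j) (by omega), hcμ]

end SpanPoly

section LocalIndependence

open Polynomial

variable {t : ℕ → ℝ} {d n : ℕ} {c : ℕ → ℝ}

theorem coeff_eq_zero_of_sum_coxDeBoor_eq_zero (ht : Monotone t) {μ : ℕ} (hdμ : d ≤ μ)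
    (hμn : μ < n) (hspan : t μ < t (μ + 1)) {S : Set ℝ} (hS : S ⊆ Ioo (t μ) (t (μ + 1)))
    (hSinf : S.Infinite) (h : ∀ x ∈ S, ∑ i ∈ Finset.range n, c i * coxDeBoor t d i x = 0)
    {j : ℕ} (hj : μ ≤ j + d) (hjμ : j ≤ μ) : c j = 0 := by
  refine spanPoly_coeff_eq_zero ht hspan hμn hdμ
    (eq_zero_of_infinite_isRoot _ (hSinf.mono fun x hx => ?_)) hj hjμ
  simp [IsRoot, eval_finsetSum, ← coxDeBoor_eq_eval_spanPoly ht (hS hx), h x hx]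

theorem exists_knotSpan_coeff_eq_zero (ht : Monotone t)
    (hclamp : ∀ μ, t μ < t (μ + 1) → d ≤ μ ∧ μ < n) {O : Set ℝ} (hO : IsOpen O)
    (h : ∀ x ∈ O ∩ Icc (t d) (t n), ∑ i ∈ Finset.range n, c i * coxDeBoor t d i x = 0)
    {lo hi : ℕ} (hlohi : t lo < t hi) {x₀ : ℝ} (hx₀O : x₀ ∈ O) (hx₀ : x₀ ∈ Icc (t lo) (t hi)) :
    ∃ μ ∈ Ico lo hi, ∀ j, μ ≤ j + d → j ≤ μ → c j = 0 := by
  obtain ⟨y, hyO, hy⟩ := mem_closure_iff.1 ((closure_Ioo hlohi.ne).symm ▸ hx₀) O hO hx₀O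
  obtain ⟨μ, hμ, hyμ⟩ := exists_knotSpan_of_mem_Ico ht (Ioo_subset_Ico_self hy)
  have hspan : t μ < t (μ + 1) := hyμ.1.trans_lt hyμ.2
  obtain ⟨hdμ, hμn⟩ := hclamp μ hspan
  obtain ⟨z, hz⟩ :=
    mem_closure_iff.1 ((closure_Ioo hspan.ne).symm ▸ Ico_subset_Icc_self hyμ) O hO hyO
  have hinf := infinite_of_mem_nhds z ((hO.inter isOpen_Ioo).mem_nhds hz)
  refine ⟨μ, hμ, fun j hj hjμ => coeff_eq_zero_of_sum_coxDeBoor_eq_zero ht hdμ hμn hspan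
    inter_subset_right hinf (fun x hx => h x ⟨hx.1, ?_⟩) hj hjμ⟩
  exact ⟨(ht hdμ).trans hx.2.1.le, hx.2.2.le.trans (ht hμn)⟩

theorem coeff_eq_zero_of_coxDeBoor_ne_zero (ht : Monotone t)
    (hclamp : ∀ μ, t μ < t (μ + 1) → d ≤ μ ∧ μ < n) {O : Set ℝ} (hO : IsOpen O)
    (h : ∀ x ∈ O ∩ Icc (t d) (t n), ∑ i ∈ Finset.range n, c i * coxDeBoor t d i x = 0)
    {i : ℕ} {x₀ : ℝ} (hx₀O : x₀ ∈ O) (hN : coxDeBoor t d i x₀ ≠ 0) : c i = 0 := by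
  obtain ⟨μ, hμ, hc⟩ := exists_knotSpan_coeff_eq_zero ht hclamp hO h
    (knot_lt_of_coxDeBoor_ne_zero ht hN) hx₀O (mem_Icc_of_coxDeBoor_ne_zero ht hN)
  exact hc i (Nat.lt_succ_iff.1 hμ.2) hμ.1

end LocalIndependence

section OpenKnots

variable {p m k : ℕ} {τ : ℕ → ℝ}

theorem openKnots_of_le {j : ℕ} (h : j ≤ p) : openKnots p m k τ j = 0 := if_pos h

theorem openKnots_of_lt {j : ℕ} (h : p + k * m < j) : openKnots p m k τ j = 1 := by
  rw [openKnots, if_neg (by omega), if_pos h]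

theorem openKnots_sdim : openKnots p m k τ (sdim p m k) = 1 :=
  openKnots_of_lt (by unfold sdim; omega)

theorem openKnots_clamped (μ : ℕ) (h : openKnots p m k τ μ < openKnots p m k τ (μ + 1)) :
    p ≤ μ ∧ μ < sdim p m k := by
  unfold sdim
  by_contra hc
  rcases not_and_or.1 hc with hc | hc
  · rw [openKnots_of_le (by omega), openKnots_of_le (by omega)] at h
    exact lt_irrefl _ h
  · rw [openKnots_of_lt (by omega), openKnots_of_lt (by omega)] at h
    exact lt_irrefl _ h

theorem openKnots_add_one_eq_add_two (hm : 2 ≤ m) :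
    openKnots p m k τ (p + 1) = openKnots p m k τ (p + 2) := by
  have hkm : k * m = 0 ∨ 2 ≤ k * m := by
    rcases Nat.eq_zero_or_pos k with rfl | hk
    · simp
    · exact Or.inr (hm.trans (Nat.le_mul_of_pos_left m hk))
  unfold openKnots
  split_ifs <;> first | rfl | omega | simp [Nat.div_eq_of_lt (by omega : 1 < m)]

theorem openKnots_mono (hm : 1 ≤ m) (hτpos : ∀ i < k, 0 < τ i) (hτlt : ∀ i < k, τ i < 1)
    (hτmono : ∀ i, i + 1 < k → τ i < τ (i + 1)) : Monotone (openKnots p m k τ) := by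
  have hidx : ∀ {j}, p < j → j ≤ p + k * m → (j - (p + 1)) / m < k := fun h₁ h₂ =>
    (Nat.div_lt_iff_lt_mul (by omega)).2 (by omega)
  refine monotone_nat_of_le_succ fun j => ?_
  unfold openKnots
  split_ifs <;> try (first | omega | (norm_num; done))
  · exact (hτpos _ (hidx (by omega) (by omega))).le
  · exact (hτlt _ (hidx (by omega) (by omega))).le
  · have hq := hidx (j := j + 1) (by omega) (by omega)
    rw [show j + 1 - (p + 1) = j - (p + 1) + 1 by omega, Nat.succ_div] at hq ⊢
    split_ifs at hq ⊢
    · exact (hτmono _ hq).le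
    · simp

theorem mem_first_knotSpan_of_Bspl_ne_zero (hm : 2 ≤ m) (hp : 1 ≤ p)
    (ht : Monotone (openKnots p m k τ)) {i : ℕ} (hi : i ≤ 1) {x : ℝ}
    (hN : Bspl p m k τ i x ≠ 0) :
    x ∈ Icc (openKnots p m k τ p) (openKnots p m k τ (p + 1)) ∧
      openKnots p m k τ p < openKnots p m k τ (p + 1) := by
  have hsupp := mem_Icc_of_coxDeBoor_ne_zero ht hN
  have hlt := knot_lt_of_coxDeBoor_ne_zero ht hN
  have hleft : openKnots p m k τ i = openKnots p m k τ p := by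
    rw [openKnots_of_le (by omega), openKnots_of_le le_rfl]
  have hright : openKnots p m k τ (i + p + 1) = openKnots p m k τ (p + 1) := by
    interval_cases i
    · rw [zero_add]
    · rw [openKnots_add_one_eq_add_two hm, add_comm 1 p]
  rw [hleft, hright] at hsupp hlt
  exact ⟨hsupp, hlt⟩

theorem sum_modFam_eq_sum_Bspl {r n : ℕ} (hn : 2 ≤ n) (c : ℕ → ℝ) (x : ℝ) :
    ∑ i ∈ Finset.range n, c i * modFam p r k τ i x =
      ∑ i ∈ Finset.range n, Function.update c 1 (c 0 + c 1) i * Bspl p (p - r) k τ i x := by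
  obtain ⟨n, rfl⟩ := Nat.exists_eq_add_of_le' hn
  simp only [Finset.sum_range_succ', modFam, Function.update_apply, Nat.add_eq_zero_iff,
    Nat.add_eq_right, one_ne_zero, and_false, if_false, if_true, zero_ne_one]
  ring

end OpenKnots

theorem linearIndependent_restrict_of_coeff_eq_zero {f : ℕ → ℝ → ℝ} {D : Set ℝ} {n : ℕ}
    (h : ∀ c : ℕ → ℝ, (∀ x ∈ D, ∑ i ∈ Finset.range n, c i * f i x = 0) →
      ∀ i < n, ∀ x ∈ D, f i x ≠ 0 → c i = 0) :
    LinearIndependent ℝ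
      (fun e : {i : ℕ // i < n ∧ ¬ ∀ x ∈ D, f i x = 0} => D.restrict (f e.1)) := by
  change LinearIndepOn ℝ (fun i => D.restrict (f i)) {i | i < n ∧ ¬ ∀ x ∈ D, f i x = 0}
  rw [linearIndepOn_iff]
  intro l hl hcomb
  have hsupp := (Finsupp.mem_supported _ _).1 hl
  have hrange : l.support ⊆ Finset.range n := fun i hi => Finset.mem_range.2 (hsupp hi).1
  ext i
  by_cases hi : i ∈ l.support
  · obtain ⟨hin, hnz⟩ := hsupp hi
    obtain ⟨x, hx, hfx⟩ := not_forall₂.1 hnz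
    refine h l (fun y hy => ?_) i hin x hx hfx
    have := congrFun hcomb ⟨y, hy⟩
    rw [Finsupp.linearCombination_apply, Finsupp.sum, Finset.sum_apply] at this
    simp only [Pi.smul_apply, smul_eq_mul, Pi.zero_apply] at this
    rwa [Finset.sum_subset hrange fun j _ hj => by simp [Finsupp.notMem_support_iff.1 hj]]
      at this
  · exact Finsupp.notMem_support_iff.1 hi

theorem modified_family_locally_linearly_independent_general (p r k : ℕ) (hp : 3 ≤ p)
    (hrp : r ≤ p - 2) (τ : ℕ → ℝ) (hτpos : ∀ i < k, 0 < τ i)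
    (hτlt : ∀ i < k, τ i < 1) (hτmono : ∀ i, i + 1 < k → τ i < τ (i + 1))
    (O : Set ℝ) (hO : IsOpen O) :
    LinearIndependent ℝ
      (fun e : {i : ℕ // i < sdim p (p - r) k ∧
          ¬ ∀ x ∈ O ∩ I01, modFam p r k τ i x = 0} =>
        (O ∩ I01).restrict (modFam p r k τ e.1)) := by
  have hm : 2 ≤ p - r := by omega
  set t := openKnots p (p - r) k τ
  set n := sdim p (p - r) k
  have ht : Monotone t := openKnots_mono (by omega) hτpos hτlt hτmono
  refine linearIndependent_restrict_of_coeff_eq_zero fun c hc i _ x₀ hx₀ hfx₀ => ?_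
  set c' := Function.update c 1 (c 0 + c 1)
  have hvan : ∀ x ∈ O ∩ Icc (t p) (t n), ∑ j ∈ Finset.range n, c' j * coxDeBoor t p j x = 0 := by
    rw [show t p = 0 from openKnots_of_le le_rfl, show t n = 1 from openKnots_sdim]
    exact fun x hx => (sum_modFam_eq_sum_Bspl (by unfold n sdim; omega) c x).symm.trans (hc x hx)
  rcases Nat.lt_or_ge i 2 with hi₂ | hi₂
  · obtain ⟨j, hj, hN⟩ : ∃ j ≤ 1, Bspl p (p - r) k τ j x₀ ≠ 0 := by
      interval_cases i
      · by_contra! hB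
        simp [modFam, hB 0 zero_le_one, hB 1 le_rfl] at hfx₀
      · exact ⟨1, le_rfl, by simpa [modFam] using hfx₀⟩
    obtain ⟨hx₀', hspan⟩ := mem_first_knotSpan_of_Bspl_ne_zero hm (by omega) ht hj hN
    obtain ⟨μ, ⟨hpμ, hμp⟩, hc'⟩ :=
      exists_knotSpan_coeff_eq_zero ht openKnots_clamped hO hvan hspan hx₀.1 hx₀'
    have h₀ : c 0 = 0 := by
      simpa [c', Function.update_of_ne zero_ne_one] using hc' 0 (by omega) (by omega)
    have h₁ : c 0 + c 1 = 0 := by simpa [c'] using hc' 1 (by omega) (by omega)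
    interval_cases i <;> linarith
  · have hN : Bspl p (p - r) k τ i x₀ ≠ 0 := by simpa [modFam, show i ≠ 0 by omega] using hfx₀
    simpa [c', Function.update_of_ne (show i ≠ 1 by omega)] using
      coeff_eq_zero_of_coxDeBoor_ne_zero ht openKnots_clamped hO hvan hx₀.1 hN

/-- The family `{N₀^{p,r} + N₁^{p,r}, N₁^{p,r}} ∪
{N_i^{p,r} : i ∈ I, i ≥ 2}` is locally linearly independent on `[0,1]`:
for every open `O ⊆ ℝ` with `O ∩ [0,1] ≠ ∅`, those functions of the family that
do not vanish identically on `O ∩ [0,1]` are linearly independent as functions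
on `O ∩ [0,1]`. -/
theorem modified_family_locally_linearly_independent (p r k : ℕ) (hp : 3 ≤ p)
    (hr : 1 ≤ r) (hrp : r ≤ p - 2) (τ : ℕ → ℝ) (hτpos : ∀ i < k, 0 < τ i)
    (hτlt : ∀ i < k, τ i < 1) (hτmono : ∀ i, i + 1 < k → τ i < τ (i + 1))
    (O : Set ℝ) (hO : IsOpen O) (hne : (O ∩ I01).Nonempty) :
    LinearIndependent ℝ
      (fun e : {i : ℕ // i < sdim p (p - r) k ∧
          ¬ ∀ x ∈ O ∩ I01, modFam p r k τ i x = 0} =>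
        (O ∩ I01).restrict (modFam p r k τ e.1)) :=
  modified_family_locally_linearly_independent_general p r k hp hrp τ hτpos hτlt hτmono O hO

end TwoPatch
end
end
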